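/- If v(x,y,t) is a (smooth) solution of the Johnson equation (v_t + (1/4)v_xxx + (3/2)v v_x + v/(2t))_x = -(12α²/t²) v_yy for t > 0, then u(ξ,η,τ) = v(ξ + η²/(3α²τ), 4η/τ, τ) satisfies the Kadomtsev–Petviashvili equation (u_τ + (1/4)u_ξξξ + (3/2)u u_ξ)_ξ = -(3α²/4) u_ηη for τ > 0. -/

import Mathlib

/-- Partial derivative in the first variable. -/
noncomputable def pd1 (u : ℝ → ℝ → ℝ → ℝ) (x y t : ℝ) : ℝ := deriv (fun s => u s y t) x
/-- Partial derivative in the second variable. -/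
noncomputable def pd2 (u : ℝ → ℝ → ℝ → ℝ) (x y t : ℝ) : ℝ := deriv (fun s => u x s t) y
/-- Partial derivative in the third variable. -/
noncomputable def pd3 (u : ℝ → ℝ → ℝ → ℝ) (x y t : ℝ) : ℝ := deriv (fun s => u x y s) t


noncomputable def d1 (G : ℝ × ℝ × ℝ → ℝ) (p : ℝ × ℝ × ℝ) : ℝ := fderiv ℝ G p (1, 0, 0)
noncomputable def d2 (G : ℝ × ℝ × ℝ → ℝ) (p : ℝ × ℝ × ℝ) : ℝ := fderiv ℝ G p (0, 1, 0)
noncomputable def d3 (G : ℝ × ℝ × ℝ → ℝ) (p : ℝ × ℝ × ℝ) : ℝ := fderiv ℝ G p (0, 0, 1)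

lemma ctop : (1 : WithTop ℕ∞) ≤ ((⊤:ℕ∞) : WithTop ℕ∞) := by exact_mod_cast le_top

lemma contDiff_d1 {G : ℝ × ℝ × ℝ → ℝ} (hG : ContDiff ℝ (⊤:ℕ∞) G) : ContDiff ℝ (⊤:ℕ∞) (d1 G) :=
  (ContinuousLinearMap.apply ℝ ℝ ((1:ℝ),(0:ℝ),(0:ℝ))).contDiff.comp (contDiff_infty_iff_fderiv.1 hG).2
lemma contDiff_d2 {G : ℝ × ℝ × ℝ → ℝ} (hG : ContDiff ℝ (⊤:ℕ∞) G) : ContDiff ℝ (⊤:ℕ∞) (d2 G) :=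
  (ContinuousLinearMap.apply ℝ ℝ ((0:ℝ),(1:ℝ),(0:ℝ))).contDiff.comp (contDiff_infty_iff_fderiv.1 hG).2
lemma contDiff_d3 {G : ℝ × ℝ × ℝ → ℝ} (hG : ContDiff ℝ (⊤:ℕ∞) G) : ContDiff ℝ (⊤:ℕ∞) (d3 G) :=
  (ContinuousLinearMap.apply ℝ ℝ ((0:ℝ),(0:ℝ),(1:ℝ))).contDiff.comp (contDiff_infty_iff_fderiv.1 hG).2

lemma diffOf {G : ℝ × ℝ × ℝ → ℝ} (hG : ContDiff ℝ (⊤:ℕ∞) G) : Differentiable ℝ G :=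
  hG.differentiable (by simp)

lemma fd_tuple (G : ℝ × ℝ × ℝ → ℝ) (p : ℝ × ℝ × ℝ) (a b c : ℝ) :
    fderiv ℝ G p (a, b, c) = a * d1 G p + b * d2 G p + c * d3 G p := by
  have h : ((a, b, c) : ℝ × ℝ × ℝ)
      = a • ((1:ℝ), (0:ℝ), (0:ℝ)) + b • ((0:ℝ), (1:ℝ), (0:ℝ)) + c • ((0:ℝ), (0:ℝ), (1:ℝ)) := by
    simp [Prod.ext_iff]
  rw [h, map_add, map_add, map_smul, map_smul, map_smul]
  simp [d1, d2, d3]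

lemma hd_basic1 {G : ℝ × ℝ × ℝ → ℝ} (hG : Differentiable ℝ G) (x y t : ℝ) :
    HasDerivAt (fun s => G (s, y, t)) (d1 G (x, y, t)) x := by
  have hp : HasDerivAt (fun s : ℝ => ((s, y, t) : ℝ × ℝ × ℝ)) (1, 0, 0) x :=
    (hasDerivAt_id x).prodMk ((hasDerivAt_const x y).prodMk (hasDerivAt_const x t))
  simpa [Function.comp_def, d1] using (hG _).hasFDerivAt.comp_hasDerivAt x hp

lemma hd_basic2 {G : ℝ × ℝ × ℝ → ℝ} (hG : Differentiable ℝ G) (x y t : ℝ) :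
    HasDerivAt (fun s => G (x, s, t)) (d2 G (x, y, t)) y := by
  have hp : HasDerivAt (fun s : ℝ => ((x, s, t) : ℝ × ℝ × ℝ)) (0, 1, 0) y :=
    (hasDerivAt_const y x).prodMk ((hasDerivAt_id y).prodMk (hasDerivAt_const y t))
  simpa [Function.comp_def, d2] using (hG _).hasFDerivAt.comp_hasDerivAt y hp

lemma hd_basic3 {G : ℝ × ℝ × ℝ → ℝ} (hG : Differentiable ℝ G) (x y t : ℝ) :
    HasDerivAt (fun s => G (x, y, s)) (d3 G (x, y, t)) t := by
  have hp : HasDerivAt (fun s : ℝ => ((x, y, s) : ℝ × ℝ × ℝ)) (0, 0, 1) t :=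
    (hasDerivAt_const t x).prodMk ((hasDerivAt_const t y).prodMk (hasDerivAt_id t))
  simpa [Function.comp_def, d3] using (hG _).hasFDerivAt.comp_hasDerivAt t hp

lemma hd_comp1 {G : ℝ × ℝ × ℝ → ℝ} (hG : Differentiable ℝ G) (α x y t : ℝ) :
    HasDerivAt (fun a => G (a + y^2 / (3 * α^2 * t), 4 * y / t, t))
      (d1 G (x + y^2 / (3 * α^2 * t), 4 * y / t, t)) x := by
  have hp : HasDerivAt (fun a : ℝ => ((a + y^2 / (3 * α^2 * t), 4 * y / t, t) : ℝ × ℝ × ℝ))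
      (1, 0, 0) x :=
    ((hasDerivAt_id x).add_const _).prodMk ((hasDerivAt_const _ _).prodMk (hasDerivAt_const _ _))
  have h := (hG _).hasFDerivAt.comp_hasDerivAt x hp
  rw [fd_tuple] at h
  simpa [Function.comp_def] using h

lemma hd_comp2 {G : ℝ × ℝ × ℝ → ℝ} (hG : Differentiable ℝ G) (α x y t : ℝ) :
    HasDerivAt (fun b => G (x + b^2 / (3 * α^2 * t), 4 * b / t, t))
      (2 * y / (3 * α^2 * t) * d1 G (x + y^2 / (3 * α^2 * t), 4 * y / t, t)
        + 4 / t * d2 G (x + y^2 / (3 * α^2 * t), 4 * y / t, t)) y := by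
  have hX : HasDerivAt (fun b : ℝ => x + b^2 / (3 * α^2 * t)) (2 * y / (3 * α^2 * t)) y := by
    have h := ((hasDerivAt_pow 2 y).div_const (3 * α^2 * t)).const_add x
    refine h.congr_deriv ?_
    norm_num
  have hY : HasDerivAt (fun b : ℝ => 4 * b / t) (4 / t) y := by
    simpa using ((hasDerivAt_id y).const_mul 4).div_const t
  have hp := hX.prodMk (hY.prodMk (hasDerivAt_const y t))
  have h := (hG _).hasFDerivAt.comp_hasDerivAt y hp
  rw [fd_tuple] at h
  simpa [Function.comp_def] using h

lemma hd_comp3 {G : ℝ × ℝ × ℝ → ℝ} (hG : Differentiable ℝ G) (α x y t : ℝ)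
    (hα : α ≠ 0) (ht : t ≠ 0) :
    HasDerivAt (fun c => G (x + y^2 / (3 * α^2 * c), 4 * y / c, c))
      (-(y^2 / (3 * α^2 * t^2)) * d1 G (x + y^2 / (3 * α^2 * t), 4 * y / t, t)
        + (-(4 * y / t^2)) * d2 G (x + y^2 / (3 * α^2 * t), 4 * y / t, t)
        + d3 G (x + y^2 / (3 * α^2 * t), 4 * y / t, t)) t := by
  have h3 : (3 : ℝ) * α^2 * t ≠ 0 :=
    mul_ne_zero (mul_ne_zero three_ne_zero (pow_ne_zero 2 hα)) ht
  have hX : HasDerivAt (fun c : ℝ => x + y^2 / (3 * α^2 * c)) (-(y^2 / (3 * α^2 * t^2))) t := by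
    have h := ((hasDerivAt_const t (y^2)).div ((hasDerivAt_id t).const_mul (3 * α^2)) h3).const_add x
    refine h.congr_deriv ?_
    simp only [id]
    field_simp
    ring
  have hY : HasDerivAt (fun c : ℝ => 4 * y / c) (-(4 * y / t^2)) t := by
    have h := (hasDerivAt_const t (4 * y)).div (hasDerivAt_id t) ht
    refine h.congr_deriv ?_
    simp only [id]
    field_simp
    ring
  have hp := hX.prodMk (hY.prodMk (hasDerivAt_id t))
  have h := (hG _).hasFDerivAt.comp_hasDerivAt t hp
  rw [fd_tuple] at h
  simpa [Function.comp_def] using h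

lemma d_sym {G : ℝ × ℝ × ℝ → ℝ} (hG : ContDiff ℝ (⊤:ℕ∞) G) (p : ℝ × ℝ × ℝ) :
    d1 (d2 G) p = d2 (d1 G) p := by
  have hdiff : Differentiable ℝ G := diffOf hG
  have hf' : ∀ q, HasFDerivAt G (fderiv ℝ G q) q := fun q => (hdiff q).hasFDerivAt
  have hD : DifferentiableAt ℝ (fderiv ℝ G) p :=
    ((contDiff_infty_iff_fderiv.1 hG).2.differentiable (by simp)) p
  have hsym := second_derivative_symmetric hf' hD.hasFDerivAt
      ((1:ℝ), (0:ℝ), (0:ℝ)) ((0:ℝ), (1:ℝ), (0:ℝ))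
  have h1 : HasFDerivAt (fun q => fderiv ℝ G q ((0:ℝ), (1:ℝ), (0:ℝ)))
      ((ContinuousLinearMap.apply ℝ ℝ ((0:ℝ), (1:ℝ), (0:ℝ))).comp (fderiv ℝ (fderiv ℝ G) p)) p :=
    (ContinuousLinearMap.apply ℝ ℝ ((0:ℝ), (1:ℝ), (0:ℝ))).hasFDerivAt.comp p hD.hasFDerivAt
  have h2 : HasFDerivAt (fun q => fderiv ℝ G q ((1:ℝ), (0:ℝ), (0:ℝ)))
      ((ContinuousLinearMap.apply ℝ ℝ ((1:ℝ), (0:ℝ), (0:ℝ))).comp (fderiv ℝ (fderiv ℝ G) p)) p :=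
    (ContinuousLinearMap.apply ℝ ℝ ((1:ℝ), (0:ℝ), (0:ℝ))).hasFDerivAt.comp p hD.hasFDerivAt
  have e1 : d1 (d2 G) p = fderiv ℝ (fderiv ℝ G) p (1,0,0) (0,1,0) := by
    show fderiv ℝ (fun q => fderiv ℝ G q ((0:ℝ), (1:ℝ), (0:ℝ))) p (1,0,0) = _
    rw [h1.fderiv]; rfl
  have e2 : d2 (d1 G) p = fderiv ℝ (fderiv ℝ G) p (0,1,0) (1,0,0) := by
    show fderiv ℝ (fun q => fderiv ℝ G q ((1:ℝ), (0:ℝ), (0:ℝ))) p (0,1,0) = _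
    rw [h2.fderiv]; rfl
  rw [e1, e2, hsym]

theorem stmt1 (α : ℝ) (hα : α ≠ 0) (v : ℝ → ℝ → ℝ → ℝ)
    (hv : ContDiff ℝ (⊤ : ℕ∞) (fun p : ℝ × ℝ × ℝ => v p.1 p.2.1 p.2.2))
    (hJE : ∀ x y t : ℝ, 0 < t →
      pd1 (fun a b c => pd3 v a b c + (1/4) * pd1 (pd1 (pd1 v)) a b c
        + (3/2) * v a b c * pd1 v a b c + v a b c / (2 * c)) x y t
      = -(12 * α^2 / t^2) * pd2 (pd2 v) x y t) :
    ∀ ξ η τ : ℝ, 0 < τ →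
      pd1 (fun a b c =>
          pd3 (fun ξ η τ => v (ξ + η^2 / (3 * α^2 * τ)) (4 * η / τ) τ) a b c
          + (1/4) * pd1 (pd1 (pd1 (fun ξ η τ => v (ξ + η^2 / (3 * α^2 * τ)) (4 * η / τ) τ))) a b c
          + (3/2) * v (a + b^2 / (3 * α^2 * c)) (4 * b / c) c
              * pd1 (fun ξ η τ => v (ξ + η^2 / (3 * α^2 * τ)) (4 * η / τ) τ) a b c) ξ η τ
      = -(3 * α^2 / 4)
          * pd2 (pd2 (fun ξ η τ => v (ξ + η^2 / (3 * α^2 * τ)) (4 * η / τ) τ)) ξ η τ := by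
  intro ξ η τ hτ
  have ht : τ ≠ 0 := ne_of_gt hτ
  set G : ℝ × ℝ × ℝ → ℝ := fun p => v p.1 p.2.1 p.2.2 with hGdef
  have hG : ContDiff ℝ (⊤:ℕ∞) G := hv.of_le (by simp)
  have d0 : Differentiable ℝ G := diffOf hG
  have hG1 := contDiff_d1 hG
  have hG2 := contDiff_d2 hG
  have hG3 := contDiff_d3 hG
  have hG11 := contDiff_d1 hG1
  have hG111 := contDiff_d1 hG11
  have h1 : pd1 (fun ξ η τ => v (ξ + η^2 / (3 * α^2 * τ)) (4 * η / τ) τ)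
      = fun x y c => d1 G (x + y^2 / (3 * α^2 * c), 4 * y / c, c) := by
    funext x y c
    exact (hd_comp1 d0 α x y c).deriv
  have h11 : pd1 (pd1 (fun ξ η τ => v (ξ + η^2 / (3 * α^2 * τ)) (4 * η / τ) τ))
      = fun x y c => d1 (d1 G) (x + y^2 / (3 * α^2 * c), 4 * y / c, c) := by
    rw [h1]; funext x y c
    exact (hd_comp1 (diffOf hG1) α x y c).deriv
  have h111 : pd1 (pd1 (pd1 (fun ξ η τ => v (ξ + η^2 / (3 * α^2 * τ)) (4 * η / τ) τ)))
      = fun x y c => d1 (d1 (d1 G)) (x + y^2 / (3 * α^2 * c), 4 * y / c, c) := by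
    rw [h11]; funext x y c
    exact (hd_comp1 (diffOf hG11) α x y c).deriv
  have h2 : pd2 (fun ξ η τ => v (ξ + η^2 / (3 * α^2 * τ)) (4 * η / τ) τ)
      = fun x y c => 2 * y / (3 * α^2 * c) * d1 G (x + y^2 / (3 * α^2 * c), 4 * y / c, c)
          + 4 / c * d2 G (x + y^2 / (3 * α^2 * c), 4 * y / c, c) := by
    funext x y c
    exact (hd_comp2 d0 α x y c).deriv
  have k1 : pd1 v = fun a b c => d1 G (a, b, c) := by
    funext a b c; exact (hd_basic1 d0 a b c).deriv
  have k2 : pd2 v = fun a b c => d2 G (a, b, c) := by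
    funext a b c; exact (hd_basic2 d0 a b c).deriv
  have k3 : pd3 v = fun a b c => d3 G (a, b, c) := by
    funext a b c; exact (hd_basic3 d0 a b c).deriv
  have k11 : pd1 (pd1 v) = fun a b c => d1 (d1 G) (a, b, c) := by
    rw [k1]; funext a b c; exact (hd_basic1 (diffOf hG1) a b c).deriv
  have k111 : pd1 (pd1 (pd1 v)) = fun a b c => d1 (d1 (d1 G)) (a, b, c) := by
    rw [k11]; funext a b c; exact (hd_basic1 (diffOf hG11) a b c).deriv
  have k22 : pd2 (pd2 v) = fun a b c => d2 (d2 G) (a, b, c) := by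
    rw [k2]; funext a b c; exact (hd_basic2 (diffOf hG2) a b c).deriv
  have hJ := hJE (ξ + η^2 / (3 * α^2 * τ)) (4 * η / τ) τ hτ
  have hJL : pd1 (fun a b c => pd3 v a b c + (1/4) * pd1 (pd1 (pd1 v)) a b c
        + (3/2) * v a b c * pd1 v a b c + v a b c / (2 * c)) (ξ + η^2 / (3 * α^2 * τ)) (4 * η / τ) τ
      = d1 (d3 G) (ξ + η^2 / (3 * α^2 * τ), 4 * η / τ, τ)
        + (1/4) * d1 (d1 (d1 (d1 G))) (ξ + η^2 / (3 * α^2 * τ), 4 * η / τ, τ)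
        + ((3/2) * d1 G (ξ + η^2 / (3 * α^2 * τ), 4 * η / τ, τ) * d1 G (ξ + η^2 / (3 * α^2 * τ), 4 * η / τ, τ) + (3/2) * G (ξ + η^2 / (3 * α^2 * τ), 4 * η / τ, τ) * d1 (d1 G) (ξ + η^2 / (3 * α^2 * τ), 4 * η / τ, τ))
        + d1 G (ξ + η^2 / (3 * α^2 * τ), 4 * η / τ, τ) / (2 * τ) := by
    simp only [k111]
    simp only [k3, k1]
    exact ((((hd_basic1 (diffOf hG3) (ξ + η^2 / (3 * α^2 * τ)) (4 * η / τ) τ).add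
        ((hd_basic1 (diffOf hG111) (ξ + η^2 / (3 * α^2 * τ)) (4 * η / τ) τ).const_mul (1/4))).add
        (((hd_basic1 d0 (ξ + η^2 / (3 * α^2 * τ)) (4 * η / τ) τ).const_mul (3/2)).mul
          (hd_basic1 (diffOf hG1) (ξ + η^2 / (3 * α^2 * τ)) (4 * η / τ) τ))).add
        ((hd_basic1 d0 (ξ + η^2 / (3 * α^2 * τ)) (4 * η / τ) τ).div_const (2 * τ))).deriv
  rw [hJL] at hJ
  simp only [k22] at hJ
  have hsym := d_sym hG (ξ + η^2 / (3 * α^2 * τ), 4 * η / τ, τ)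
  have hLHS : pd1 (fun a b c =>
          pd3 (fun ξ η τ => v (ξ + η^2 / (3 * α^2 * τ)) (4 * η / τ) τ) a b c
          + (1/4) * pd1 (pd1 (pd1 (fun ξ η τ => v (ξ + η^2 / (3 * α^2 * τ)) (4 * η / τ) τ))) a b c
          + (3/2) * v (a + b^2 / (3 * α^2 * c)) (4 * b / c) c
              * pd1 (fun ξ η τ => v (ξ + η^2 / (3 * α^2 * τ)) (4 * η / τ) τ) a b c) ξ η τ
      = (-(η^2 / (3 * α^2 * τ^2)) * d1 (d1 G) (ξ + η^2 / (3 * α^2 * τ), 4 * η / τ, τ) + (-(4 * η / τ^2)) * d1 (d2 G) (ξ + η^2 / (3 * α^2 * τ), 4 * η / τ, τ)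
          + d1 (d3 G) (ξ + η^2 / (3 * α^2 * τ), 4 * η / τ, τ))
        + (1/4) * d1 (d1 (d1 (d1 G))) (ξ + η^2 / (3 * α^2 * τ), 4 * η / τ, τ)
        + ((3/2) * d1 G (ξ + η^2 / (3 * α^2 * τ), 4 * η / τ, τ) * d1 G (ξ + η^2 / (3 * α^2 * τ), 4 * η / τ, τ) + (3/2) * G (ξ + η^2 / (3 * α^2 * τ), 4 * η / τ, τ) * d1 (d1 G) (ξ + η^2 / (3 * α^2 * τ), 4 * η / τ, τ)) := by
    simp only [h111]
    simp only [h1]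
    have key : (fun s => pd3 (fun ξ η τ => v (ξ + η^2 / (3 * α^2 * τ)) (4 * η / τ) τ) s η τ
          + (1/4) * d1 (d1 (d1 G)) (s + η^2 / (3 * α^2 * τ), 4 * η / τ, τ)
          + (3/2) * v (s + η^2 / (3 * α^2 * τ)) (4 * η / τ) τ * d1 G (s + η^2 / (3 * α^2 * τ), 4 * η / τ, τ))
        = (fun s => (-(η^2 / (3 * α^2 * τ^2)) * d1 G (s + η^2 / (3 * α^2 * τ), 4 * η / τ, τ)
            + (-(4 * η / τ^2)) * d2 G (s + η^2 / (3 * α^2 * τ), 4 * η / τ, τ) + d3 G (s + η^2 / (3 * α^2 * τ), 4 * η / τ, τ))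
          + (1/4) * d1 (d1 (d1 G)) (s + η^2 / (3 * α^2 * τ), 4 * η / τ, τ)
          + (3/2) * v (s + η^2 / (3 * α^2 * τ)) (4 * η / τ) τ * d1 G (s + η^2 / (3 * α^2 * τ), 4 * η / τ, τ)) := by
      funext s
      rw [show pd3 (fun ξ η τ => v (ξ + η^2 / (3 * α^2 * τ)) (4 * η / τ) τ) s η τ = _ from (hd_comp3 d0 α s η τ hα ht).deriv]
    have step : pd1 (fun a b c =>
          pd3 (fun ξ η τ => v (ξ + η^2 / (3 * α^2 * τ)) (4 * η / τ) τ) a b c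
          + (1/4) * d1 (d1 (d1 G)) (a + b^2 / (3 * α^2 * c), 4 * b / c, c)
          + (3/2) * v (a + b^2 / (3 * α^2 * c)) (4 * b / c) c
              * d1 G (a + b^2 / (3 * α^2 * c), 4 * b / c, c)) ξ η τ
        = deriv (fun s => (-(η^2 / (3 * α^2 * τ^2)) * d1 G (s + η^2 / (3 * α^2 * τ), 4 * η / τ, τ)
            + (-(4 * η / τ^2)) * d2 G (s + η^2 / (3 * α^2 * τ), 4 * η / τ, τ) + d3 G (s + η^2 / (3 * α^2 * τ), 4 * η / τ, τ))
          + (1/4) * d1 (d1 (d1 G)) (s + η^2 / (3 * α^2 * τ), 4 * η / τ, τ)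
          + (3/2) * v (s + η^2 / (3 * α^2 * τ)) (4 * η / τ) τ * d1 G (s + η^2 / (3 * α^2 * τ), 4 * η / τ, τ)) ξ :=
      congrArg (fun f => deriv f ξ) key
    rw [step]
    exact (((((hd_comp1 (diffOf hG1) α ξ η τ).const_mul (-(η^2 / (3 * α^2 * τ^2)))).add
        ((hd_comp1 (diffOf hG2) α ξ η τ).const_mul (-(4 * η / τ^2)))).add
        (hd_comp1 (diffOf hG3) α ξ η τ)).add
        ((hd_comp1 (diffOf hG111) α ξ η τ).const_mul (1/4)) |>.add
        (((hd_comp1 d0 α ξ η τ).const_mul (3/2)).mul (hd_comp1 (diffOf hG1) α ξ η τ))).deriv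
  have hRHS : pd2 (pd2 (fun ξ η τ => v (ξ + η^2 / (3 * α^2 * τ)) (4 * η / τ) τ)) ξ η τ
      = 2 / (3 * α^2 * τ) * d1 G (ξ + η^2 / (3 * α^2 * τ), 4 * η / τ, τ)
        + 2 * η / (3 * α^2 * τ) * (2 * η / (3 * α^2 * τ) * d1 (d1 G) (ξ + η^2 / (3 * α^2 * τ), 4 * η / τ, τ) + 4 / τ * d2 (d1 G) (ξ + η^2 / (3 * α^2 * τ), 4 * η / τ, τ))
        + 4 / τ * (2 * η / (3 * α^2 * τ) * d1 (d2 G) (ξ + η^2 / (3 * α^2 * τ), 4 * η / τ, τ) + 4 / τ * d2 (d2 G) (ξ + η^2 / (3 * α^2 * τ), 4 * η / τ, τ)) := by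
    rw [h2]
    have hc : HasDerivAt (fun b : ℝ => 2 * b / (3 * α^2 * τ)) (2 / (3 * α^2 * τ)) η := by
      simpa using ((hasDerivAt_id η).const_mul 2).div_const (3 * α^2 * τ)
    exact ((hc.mul (hd_comp2 (diffOf hG1) α ξ η τ)).add
        ((hd_comp2 (diffOf hG2) α ξ η τ).const_mul (4 / τ))).deriv
  rw [hLHS, hRHS, ← hsym]
  have e : d1 (d3 G) (ξ + η^2 / (3 * α^2 * τ), 4 * η / τ, τ)
      = -(12 * α^2 / τ^2) * d2 (d2 G) (ξ + η^2 / (3 * α^2 * τ), 4 * η / τ, τ) - d1 G (ξ + η^2 / (3 * α^2 * τ), 4 * η / τ, τ) / (2 * τ)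
        - (1/4) * d1 (d1 (d1 (d1 G))) (ξ + η^2 / (3 * α^2 * τ), 4 * η / τ, τ)
        - ((3/2) * d1 G (ξ + η^2 / (3 * α^2 * τ), 4 * η / τ, τ) * d1 G (ξ + η^2 / (3 * α^2 * τ), 4 * η / τ, τ) + (3/2) * G (ξ + η^2 / (3 * α^2 * τ), 4 * η / τ, τ) * d1 (d1 G) (ξ + η^2 / (3 * α^2 * τ), 4 * η / τ, τ)) := by
    linarith [hJ]
  rw [e]
  field_simp
  ring
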